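/- arXiv:1705.09654 — 7 statements merged into one kernel-verified Lean document; each statement's English description precedes it below -/
import Mathlib

section
/- Let S be an inverse semigroup and w an invertible multiplier of S (invertible in the multiplier monoid M(S)). Then for all s ∈ S, (ws)⁻¹ = s⁻¹ w⁻¹ and (sw)⁻¹ = w⁻¹ s⁻¹, where x⁻¹ denotes the inverse in the inverse semigroup S. -/
/-- An inverse semigroup: every element has a unique (generalized) inverse. -/
class InverseSemigroup (S : Type*) extends Semigroup S, Inv S where
  mul_inv_mul : ∀ a : S, a * a⁻¹ * a = a
  inv_mul_inv : ∀ a : S, a⁻¹ * a * a⁻¹ = a⁻¹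
  inv_unique : ∀ a b : S, a * b * a = a → b * a * b = b → b = a⁻¹

/-- `e` is an idempotent. -/
def IsIdem {S : Type*} [Mul S] (e : S) : Prop := e * e = e

/-- The natural partial order on an inverse semigroup: `a ≤ b` iff `a = e * b`
for some idempotent `e`. -/
def NatLe {S : Type*} [Mul S] (a b : S) : Prop := ∃ e, IsIdem e ∧ a = e * b

/-- A multiplier of a semigroup `S`: a pair of maps `s ↦ ws` (here `l`) and
`s ↦ sw` (here `r`) with `w(st) = (ws)t`, `(st)w = s(tw)` and `s(wt) = (sw)t`. -/
structure Multiplier (S : Type*) [Semigroup S] where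
  l : S → S
  r : S → S
  l_mul : ∀ s t : S, l (s * t) = l s * t
  mul_r : ∀ s t : S, r (s * t) = s * r t
  assoc : ∀ s t : S, s * l t = r s * t

/-- For an invertible multiplier `w` of an inverse semigroup `S` (with inverse
multiplier `w'` in the multiplier monoid), `(ws)⁻¹ = s⁻¹w⁻¹` and `(sw)⁻¹ = w⁻¹s⁻¹`. -/
theorem stmt1 {S : Type*} [InverseSemigroup S] (w w' : Multiplier S)
    (hll : ∀ s, w.l (w'.l s) = s) (hll' : ∀ s, w'.l (w.l s) = s)
    (hrr : ∀ s, w'.r (w.r s) = s) (hrr' : ∀ s, w.r (w'.r s) = s) :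
    ∀ s : S, (w.l s)⁻¹ = w'.r s⁻¹ ∧ (w.r s)⁻¹ = w'.l s⁻¹ := by
  intro s
  have key1 : w'.r s⁻¹ * w.l s = s⁻¹ * s := by
    rw [w.assoc, hrr']
  have key2 : w.r s * w'.l s⁻¹ = s * s⁻¹ := by
    rw [w'.assoc, hrr]
  constructor
  · refine (InverseSemigroup.inv_unique _ _ ?_ ?_).symm
    · calc w.l s * w'.r s⁻¹ * w.l s = w.l s * (w'.r s⁻¹ * w.l s) := mul_assoc _ _ _
        _ = w.l s * (s⁻¹ * s) := by rw [key1]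
        _ = w.l (s * (s⁻¹ * s)) := (w.l_mul _ _).symm
        _ = w.l s := by rw [← mul_assoc, InverseSemigroup.mul_inv_mul]
    · calc w'.r s⁻¹ * w.l s * w'.r s⁻¹ = (s⁻¹ * s) * w'.r s⁻¹ := by rw [key1]
        _ = w'.r (s⁻¹ * s * s⁻¹) := by rw [w'.mul_r, mul_assoc]
        _ = w'.r s⁻¹ := by rw [InverseSemigroup.inv_mul_inv]
  · refine (InverseSemigroup.inv_unique _ _ ?_ ?_).symm
    · calc w.r s * w'.l s⁻¹ * w.r s = (s * s⁻¹) * w.r s := by rw [key2]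
        _ = w.r (s * s⁻¹ * s) := by rw [w.mul_r, mul_assoc]
        _ = w.r s := by rw [InverseSemigroup.mul_inv_mul]
    · calc w'.l s⁻¹ * w.r s * w'.l s⁻¹ = w'.l s⁻¹ * (w.r s * w'.l s⁻¹) := mul_assoc _ _ _
        _ = w'.l s⁻¹ * (s * s⁻¹) := by rw [key2]
        _ = w'.l (s⁻¹ * (s * s⁻¹)) := (w'.l_mul _ _).symm
        _ = w'.l s⁻¹ := by rw [← mul_assoc, InverseSemigroup.inv_mul_inv]
end

section
/- Let S be a commutative semigroup with S² = S. Then every multiplier w of S commutes with every element of S (ws = sw for all s ∈ S), and any two multipliers of S commute with each other in the multiplier monoid M(S). -/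
/-- If `S` is a commutative semigroup with `S² = S`, then every multiplier of `S`
commutes with every element of `S` (`ws = sw`), and any two multipliers of `S`
commute with each other in the multiplier monoid (both in the left and in the
right coordinates of the composition). -/
theorem stmt2 {S : Type*} [Semigroup S]
    (hcomm : ∀ a b : S, a * b = b * a)
    (hS2 : ∀ s : S, ∃ a b : S, s = a * b) :
    (∀ (w : Multiplier S) (s : S), w.l s = w.r s) ∧
    (∀ (w w' : Multiplier S) (s : S),
      w.l (w'.l s) = w'.l (w.l s) ∧ w'.r (w.r s) = w.r (w'.r s)) := by
  have hlr : ∀ (w : Multiplier S) (s : S), w.l s = w.r s := by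
    intro w s
    obtain ⟨a, b, rfl⟩ := hS2 s
    calc w.l (a * b) = w.l a * b := w.l_mul a b
      _ = b * w.l a := hcomm _ _
      _ = w.r b * a := w.assoc b a
      _ = a * w.r b := hcomm _ _
      _ = w.r (a * b) := (w.mul_r a b).symm
  have key : ∀ (w w' : Multiplier S) (s : S), w.l (w'.l s) = w'.l (w.l s) := by
    intro w w' s
    obtain ⟨a, b, rfl⟩ := hS2 s
    calc w.l (w'.l (a * b)) = w.l (w'.r (a * b)) := by rw [hlr w']
      _ = w.l (a * w'.r b) := by rw [w'.mul_r]
      _ = w.l a * w'.r b := w.l_mul _ _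
      _ = w'.r (w.l a * b) := (w'.mul_r _ _).symm
      _ = w'.l (w.l a * b) := (hlr _ _).symm
      _ = w'.l (w.l (a * b)) := by rw [w.l_mul]
  refine ⟨hlr, fun w w' s => ⟨key w w' s, ?_⟩⟩
  rw [← hlr, ← hlr w, ← hlr w', ← hlr w, key]
end

section
/- Let S be an inverse semigroup, A a semilattice of abelian groups, (α, λ) an S-module structure on A, and f : S × S → A a 2-cocycle (i.e., f(s,t) ∈ A_{α(s t t⁻¹ s⁻¹)} and λ_s(f(t,u)) f(s,tu) = f(s,t) f(st,u) for all s,t,u). Then each of the conditions 'f(e,es) = α(e s s⁻¹) for all s ∈ S, e ∈ E(S)' and 'f(se,e) = α(s e s⁻¹) for all s ∈ S, e ∈ E(S)' is equivalent to 'f(e,e) = α(e) for all e ∈ E(S)'. -/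
/-- An `S`-module structure `(α, λ)` on a semilattice of abelian groups `A`
(modelled as a commutative inverse semigroup): `α` is an isomorphism
`E(S) → E(A)` and `lam` is a homomorphism of `S` into endomorphisms of `A`
satisfying `λ_e(a) = α(e)a` and `λ_s(α(e)) = α(s e s⁻¹)`. -/
structure SMod (S A : Type*) [InverseSemigroup S] [InverseSemigroup A] where
  α : S → A
  lam : S → A → A
  α_idem : ∀ e : S, IsIdem e → IsIdem (α e)
  α_mul : ∀ e f : S, IsIdem e → IsIdem f → α (e * f) = α e * α f
  α_inj : ∀ e f : S, IsIdem e → IsIdem f → α e = α f → e = f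
  α_surj : ∀ g : A, IsIdem g → ∃ e : S, IsIdem e ∧ α e = g
  lam_mul : ∀ (s : S) (a b : A), lam s (a * b) = lam s a * lam s b
  lam_idem : ∀ e : S, IsIdem e → ∀ a : A, lam e a = α e * a
  lam_alpha : ∀ (s e : S), IsIdem e → lam s (α e) = α (s * e * s⁻¹)
  lam_comp : ∀ (s t : S) (a : A), lam s (lam t a) = lam (s * t) a

section Aux

variable {S : Type*} [InverseSemigroup S]

open InverseSemigroup

theorem my_inv_inv (a : S) : a⁻¹⁻¹ = a :=
  (inv_unique a⁻¹ a (inv_mul_inv a) (mul_inv_mul a)).symm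

theorem idem_inv {e : S} (he : IsIdem e) : e⁻¹ = e := by
  have h : e * e * e = e := by rw [he, he]
  exact (inv_unique e e h h).symm

theorem idem_absorb {e : S} (he : IsIdem e) (x : S) : e * (e * x) = e * x := by
  rw [← mul_assoc, he]

theorem isIdem_mul_inv (a : S) : IsIdem (a * a⁻¹) := by
  show a * a⁻¹ * (a * a⁻¹) = a * a⁻¹
  rw [← mul_assoc, mul_inv_mul]

theorem isIdem_inv_mul (a : S) : IsIdem (a⁻¹ * a) := by
  show a⁻¹ * a * (a⁻¹ * a) = a⁻¹ * a
  rw [← mul_assoc, inv_mul_inv]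

theorem idem_mul {e g : S} (he : IsIdem e) (hg : IsIdem g) : IsIdem (e * g) := by
  set x := (e * g)⁻¹ with hxdef
  have hx1 : (e * g) * x * (e * g) = e * g := mul_inv_mul _
  have hx2 : x * (e * g) * x = x := inv_mul_inv _
  have hx1' : e * (g * (x * (e * g))) = e * g := by
    simp only [mul_assoc] at hx1; exact hx1
  have hx2' : x * (e * (g * (x * e))) = x * e := by
    have := congrArg (· * e) hx2
    simp only [mul_assoc] at this
    exact this
  have h1 : (e * g) * (g * x * e) * (e * g) = e * g := by
    have : (e * g) * (g * x * e) * (e * g) = e * (g * (g * (x * (e * (e * g))))) := by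
      simp only [mul_assoc]
    rw [this, idem_absorb he, idem_absorb hg, hx1']
  have h2 : (g * x * e) * (e * g) * (g * x * e) = g * x * e := by
    have h3 : (g * x * e) * (e * g) * (g * x * e)
        = g * (x * (e * (e * (g * (g * (x * e)))))) := by
      simp only [mul_assoc]
    rw [h3, idem_absorb hg, idem_absorb he, hx2', ← mul_assoc]
  have hfe : g * x * e = x := inv_unique (e * g) (g * x * e) h1 h2
  have hxx : IsIdem x := by
    show x * x = x
    calc x * x = (g * x * e) * (g * x * e) := by rw [hfe]
      _ = g * (x * (e * (g * (x * e)))) := by simp only [mul_assoc]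
      _ = g * (x * e) := by rw [hx2']
      _ = x := by rw [← mul_assoc, hfe]
  have hxe : e * g = x := by
    rw [← my_inv_inv (e * g), ← hxdef, idem_inv hxx]
  rw [hxe]; exact hxx

theorem idem_comm {e g : S} (he : IsIdem e) (hg : IsIdem g) : e * g = g * e := by
  have heg := idem_mul he hg
  have hge := idem_mul hg he
  have heg' : e * (g * (e * g)) = e * g := by
    have := heg; simp only [IsIdem, mul_assoc] at this; exact this
  have hge' : g * (e * (g * e)) = g * e := by
    have := hge; simp only [IsIdem, mul_assoc] at this; exact this
  have h1 : (e * g) * (g * e) * (e * g) = e * g := by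
    have h3 : (e * g) * (g * e) * (e * g) = e * (g * (g * (e * (e * g)))) := by
      simp only [mul_assoc]
    rw [h3, idem_absorb hg, idem_absorb he, heg']
  have h2 : (g * e) * (e * g) * (g * e) = g * e := by
    have h3 : (g * e) * (e * g) * (g * e) = g * (e * (e * (g * (g * e)))) := by
      simp only [mul_assoc]
    rw [h3, idem_absorb he, idem_absorb hg, hge']
  have := inv_unique (e * g) (g * e) h1 h2
  rw [this, idem_inv heg]

theorem my_mul_inv_rev (a b : S) : (a * b)⁻¹ = b⁻¹ * a⁻¹ := by
  have h1 : (a * b) * (b⁻¹ * a⁻¹) * (a * b) = a * b := by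
    calc (a * b) * (b⁻¹ * a⁻¹) * (a * b)
        = a * ((b * b⁻¹) * ((a⁻¹ * a) * b)) := by simp only [mul_assoc]
      _ = a * ((a⁻¹ * a) * ((b * b⁻¹) * b)) := by
          rw [← mul_assoc (b * b⁻¹), idem_comm (isIdem_mul_inv b) (isIdem_inv_mul a),
            mul_assoc]
      _ = (a * (a⁻¹ * a)) * ((b * b⁻¹) * b) := by simp only [mul_assoc]
      _ = a * b := by rw [← mul_assoc a, mul_inv_mul, mul_inv_mul]
  have h2 : (b⁻¹ * a⁻¹) * (a * b) * (b⁻¹ * a⁻¹) = b⁻¹ * a⁻¹ := by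
    calc (b⁻¹ * a⁻¹) * (a * b) * (b⁻¹ * a⁻¹)
        = b⁻¹ * ((a⁻¹ * a) * ((b * b⁻¹) * a⁻¹)) := by simp only [mul_assoc]
      _ = b⁻¹ * ((b * b⁻¹) * ((a⁻¹ * a) * a⁻¹)) := by
          rw [← mul_assoc (a⁻¹ * a), idem_comm (isIdem_inv_mul a) (isIdem_mul_inv b),
            mul_assoc]
      _ = (b⁻¹ * (b * b⁻¹)) * ((a⁻¹ * a) * a⁻¹) := by simp only [mul_assoc]
      _ = b⁻¹ * a⁻¹ := by
          rw [← mul_assoc b⁻¹, inv_mul_inv, inv_mul_inv]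
  exact (inv_unique (a * b) (b⁻¹ * a⁻¹) h1 h2).symm

end Aux

/-- For a 2-cocycle `f` with values in an `S`-module `A`, each of the
normalization conditions `f(e,es) = α(e s s⁻¹)` and `f(se,e) = α(s e s⁻¹)`
is equivalent to `f(e,e) = α(e)` for all idempotents `e`. -/
theorem stmt5 {S A : Type*} [InverseSemigroup S] [InverseSemigroup A]
    (hA : ∀ a b : A, a * b = b * a) (M : SMod S A) (f : S → S → A)
    (hmem : ∀ s t : S, f s t * (f s t)⁻¹ = M.α (s * t * t⁻¹ * s⁻¹))
    (hcoc : ∀ s t u : S, M.lam s (f t u) * f s (t * u) = f s t * f (s * t) u) :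
    ((∀ (s e : S), IsIdem e → f e (e * s) = M.α (e * s * s⁻¹)) ↔
      (∀ e : S, IsIdem e → f e e = M.α e)) ∧
    ((∀ (s e : S), IsIdem e → f (s * e) e = M.α (s * e * s⁻¹)) ↔
      (∀ e : S, IsIdem e → f e e = M.α e)) := by
  open InverseSemigroup in
  constructor
  · constructor
    · intro h e he
      have := h e e he
      rw [he, idem_inv he, he] at this
      exact this
    · -- backward direction 1
      intro hf s e he
      have hc := hcoc e e s
      rw [M.lam_idem e he, he, hf e he] at hc
      -- hc : M.α e * f e s * f e (e * s) = M.α e * f e s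
      set g := f e s with hg
      set h := f e (e * s) with hh
      have hS1 : e * s * s⁻¹ * e⁻¹ = e * (s * s⁻¹) := by
        rw [idem_inv he]
        simp only [mul_assoc]
        rw [← mul_assoc s, idem_comm (isIdem_mul_inv s) he, idem_absorb he]
      have hS2 : e * (e * s) * (e * s)⁻¹ * e⁻¹ = e * (s * s⁻¹) := by
        rw [my_mul_inv_rev, idem_inv he]
        simp only [mul_assoc, idem_absorb he]
        rw [he, ← mul_assoc s, idem_comm (isIdem_mul_inv s) he, idem_absorb he]
      have hSidem : IsIdem (e * (s * s⁻¹)) := idem_mul he (isIdem_mul_inv s)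
      have hgg : g * g⁻¹ = M.α (e * (s * s⁻¹)) := by
        have := hmem e s; rw [hS1] at this; exact this
      have hhh : h * h⁻¹ = M.α (e * (s * s⁻¹)) := by
        have := hmem e (e * s); rw [hS2] at this; exact this
      have hαε : M.α e * M.α (e * (s * s⁻¹)) = M.α (e * (s * s⁻¹)) := by
        rw [← M.α_mul e _ he hSidem, idem_absorb he]
      have h1 : M.α e * g * h * g⁻¹ = M.α e * g * g⁻¹ := by rw [hc]
      have h2 : M.α e * (g * g⁻¹) * h = M.α e * (g * g⁻¹) := by
        have e1 : M.α e * (g * g⁻¹) * h = M.α e * g * h * g⁻¹ := by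
          simp only [mul_assoc]
          rw [hA g⁻¹ h]
        rw [e1, h1]
        simp only [mul_assoc]
      rw [hgg, hαε] at h2
      have hfin : h = M.α (e * (s * s⁻¹)) := by
        calc h = h * h⁻¹ * h := (mul_inv_mul h).symm
          _ = M.α (e * (s * s⁻¹)) * h := by rw [hhh]
          _ = M.α (e * (s * s⁻¹)) := h2
      rw [mul_assoc e s s⁻¹]
      exact hfin
  · constructor
    · intro h e he
      have := h e e he
      rw [he, idem_inv he, he] at this
      exact this
    · -- backward direction 2
      intro hf s e he
      have hc := hcoc s e e
      rw [hf e he, M.lam_alpha s e he, he] at hc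
      -- hc : M.α (s * e * s⁻¹) * f s e = f s e * f (s * e) e
      set g := f s e with hg
      set h := f (s * e) e with hh
      have hS3 : s * e * e⁻¹ * s⁻¹ = s * e * s⁻¹ := by
        rw [idem_inv he, mul_assoc s e e, he]
      have hS4 : s * e * e * e⁻¹ * (s * e)⁻¹ = s * e * s⁻¹ := by
        rw [my_mul_inv_rev, idem_inv he]
        simp only [mul_assoc, idem_absorb he]
      have hεS : IsIdem (s * e * s⁻¹) := by
        show s * e * s⁻¹ * (s * e * s⁻¹) = s * e * s⁻¹
        simp only [mul_assoc]
        rw [← mul_assoc s⁻¹ s, ← mul_assoc (s⁻¹ * s) e,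
          idem_comm (isIdem_inv_mul s) he, mul_assoc e (s⁻¹ * s) s⁻¹,
          inv_mul_inv, idem_absorb he]
      have hεidem : IsIdem (M.α (s * e * s⁻¹)) := M.α_idem _ hεS
      have hgg : g * g⁻¹ = M.α (s * e * s⁻¹) := by
        have := hmem s e; rw [hS3] at this; exact this
      have hhh : h * h⁻¹ = M.α (s * e * s⁻¹) := by
        have := hmem (s * e) e; rw [hS4] at this; exact this
      have h1 : M.α (s * e * s⁻¹) * g * g⁻¹ = g * h * g⁻¹ := by rw [hc]
      have h2 : M.α (s * e * s⁻¹) = M.α (s * e * s⁻¹) * h := by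
        calc M.α (s * e * s⁻¹)
            = M.α (s * e * s⁻¹) * M.α (s * e * s⁻¹) := hεidem.symm
          _ = M.α (s * e * s⁻¹) * (g * g⁻¹) := by rw [hgg]
          _ = M.α (s * e * s⁻¹) * g * g⁻¹ := (mul_assoc _ g g⁻¹).symm
          _ = g * h * g⁻¹ := h1
          _ = g * g⁻¹ * h := by
              simp only [mul_assoc]; rw [hA h g⁻¹]
          _ = M.α (s * e * s⁻¹) * h := by rw [hgg]
      calc h = h * h⁻¹ * h := (mul_inv_mul h).symm
        _ = M.α (s * e * s⁻¹) * h := by rw [hhh]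
        _ = M.α (s * e * s⁻¹) := h2.symm
end

section
/- Let (α, λ) be an S-module structure on a semilattice of abelian groups A, and let f be a 2-cocycle in Z²(S¹, A¹). Define g : S → A by g(s) = f(s, s⁻¹)⁻¹. Then g is a 1-cochain (g(s) ∈ A_{α(s s⁻¹)}), and the cohomologous cocycle f̃(s,t) = f(s,t)·λ_s(g(t))·g(st)⁻¹·g(s) satisfies f̃(e,e) = α(e) for all idempotents e; hence every class in H²(S¹, A¹) contains a twisting related to the S-module A (i.e., a normalized 2-cocycle). -/
open InverseSemigroup in
theorem iisIdem_mul_inv {S : Type*} [InverseSemigroup S] (a : S) : IsIdem (a * a⁻¹) := by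
  show a * a⁻¹ * (a * a⁻¹) = a * a⁻¹
  rw [← mul_assoc, mul_inv_mul]

open InverseSemigroup in
theorem iinv_inv {S : Type*} [InverseSemigroup S] (a : S) : a⁻¹⁻¹ = a :=
  (inv_unique a⁻¹ a (inv_mul_inv a) (mul_inv_mul a)).symm

open InverseSemigroup in
theorem iidem_inv {S : Type*} [InverseSemigroup S] {e : S} (he : IsIdem e) : e⁻¹ = e := by
  have h : e * e * e = e := by rw [he, he]
  exact (inv_unique e e h h).symm

open InverseSemigroup in
theorem iidem_mul {S : Type*} [InverseSemigroup S] {e g : S} (he : IsIdem e) (hg : IsIdem g) :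
    IsIdem (e * g) := by
  have he' : e * e = e := he
  have hg' : g * g = g := hg
  have hce : ∀ x : S, e * (e * x) = e * x := fun x => by rw [← mul_assoc, he']
  have hcg : ∀ x : S, g * (g * x) = g * x := fun x => by rw [← mul_assoc, hg']
  have h1 : (e * g) * (g * ((e * g)⁻¹ * e)) * (e * g) = e * g := by
    have h := mul_inv_mul (e * g)
    simp only [mul_assoc] at h ⊢
    rw [hcg, hce]
    exact h
  have h2 : (g * ((e * g)⁻¹ * e)) * (e * g) * (g * ((e * g)⁻¹ * e)) = g * ((e * g)⁻¹ * e) := by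
    have h := congrArg (· * e) (inv_mul_inv (e * g))
    simp only [mul_assoc] at h ⊢
    rw [hce, hcg]
    rw [h]
  have hb : g * ((e * g)⁻¹ * e) = (e * g)⁻¹ := inv_unique _ _ h1 h2
  have hbidem : IsIdem ((e * g)⁻¹) := by
    show (e * g)⁻¹ * (e * g)⁻¹ = (e * g)⁻¹
    conv_lhs => rw [← hb, ← hb]
    simp only [mul_assoc]
    simp only [hcg, hce, he', hg']
    have h := congrArg (fun x => g * (x * e)) (inv_mul_inv (e * g))
    simp only [mul_assoc] at h ⊢
    rw [h, hb]
  have heq : e * g = (e * g)⁻¹ := (iinv_inv _).symm.trans (iidem_inv hbidem)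
  show (e * g) * (e * g) = e * g
  conv_lhs => rw [heq, hbidem]
  exact heq.symm

open InverseSemigroup in
theorem iidem_comm {S : Type*} [InverseSemigroup S] {e g : S} (he : IsIdem e) (hg : IsIdem g) :
    e * g = g * e := by
  have heg := iidem_mul he hg
  have hge := iidem_mul hg he
  have heg' : e * g * (e * g) = e * g := heg
  have hge' : g * e * (g * e) = g * e := hge
  have hce : ∀ x : S, e * (e * x) = e * x := fun x => by rw [← mul_assoc, (he : e*e=e)]
  have hcg : ∀ x : S, g * (g * x) = g * x := fun x => by rw [← mul_assoc, (hg : g*g=g)]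
  have h1 : (e * g) * (g * e) * (e * g) = e * g := by
    simp only [mul_assoc] at heg' ⊢
    rw [hcg, hce]
    exact heg'
  have h2 : (g * e) * (e * g) * (g * e) = g * e := by
    simp only [mul_assoc] at hge' ⊢
    rw [hce, hcg]
    exact hge'
  have := inv_unique _ _ h1 h2
  rw [this, iidem_inv heg]

open InverseSemigroup in
theorem imul_inv_rev {S : Type*} [InverseSemigroup S] (a b : S) : (a * b)⁻¹ = b⁻¹ * a⁻¹ := by
  have hbb : IsIdem (b * b⁻¹) := by show b * b⁻¹ * (b * b⁻¹) = _; rw [← mul_assoc, mul_inv_mul]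
  have haa : IsIdem (a⁻¹ * a) := by show a⁻¹ * a * (a⁻¹ * a) = _; rw [← mul_assoc, inv_mul_inv]
  have hcomm : (b * b⁻¹) * (a⁻¹ * a) = (a⁻¹ * a) * (b * b⁻¹) := iidem_comm hbb haa
  have h1 : (a * b) * (b⁻¹ * a⁻¹) * (a * b) = a * b := by
    calc (a * b) * (b⁻¹ * a⁻¹) * (a * b) = a * ((b * b⁻¹) * (a⁻¹ * a)) * b := by
          simp only [mul_assoc]
      _ = a * ((a⁻¹ * a) * (b * b⁻¹)) * b := by rw [hcomm]
      _ = (a * a⁻¹ * a) * (b * b⁻¹ * b) := by simp only [mul_assoc]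
      _ = a * b := by rw [mul_inv_mul, mul_inv_mul]
  have h2 : (b⁻¹ * a⁻¹) * (a * b) * (b⁻¹ * a⁻¹) = b⁻¹ * a⁻¹ := by
    calc (b⁻¹ * a⁻¹) * (a * b) * (b⁻¹ * a⁻¹) = b⁻¹ * ((a⁻¹ * a) * (b * b⁻¹)) * a⁻¹ := by
          simp only [mul_assoc]
      _ = b⁻¹ * ((b * b⁻¹) * (a⁻¹ * a)) * a⁻¹ := by rw [hcomm]
      _ = (b⁻¹ * b * b⁻¹) * (a⁻¹ * a * a⁻¹) := by simp only [mul_assoc]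
      _ = b⁻¹ * a⁻¹ := by rw [inv_mul_inv, inv_mul_inv]
  exact (inv_unique _ _ h1 h2).symm


/-- Given a 2-cocycle `f ∈ Z²(S¹,A¹)`, the map `g(s) = f(s,s⁻¹)⁻¹` is a
1-cochain, and the cohomologous cocycle
`f̃(s,t) = f(s,t) · λ_s(g(t)) · g(st)⁻¹ · g(s)` satisfies `f̃(e,e) = α(e)` for
all idempotents `e`; hence (being a cocycle normalized at idempotents) `f̃` is a
twisting related to the `S`-module `A`, i.e. every class of `H²(S¹,A¹)`
contains a twisting. -/
theorem stmt6 {S A : Type*} [InverseSemigroup S] [InverseSemigroup A]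
    (hA : ∀ a b : A, a * b = b * a) (M : SMod S A) (f : S → S → A)
    (hmem : ∀ s t : S, f s t * (f s t)⁻¹ = M.α (s * t * t⁻¹ * s⁻¹))
    (hcoc : ∀ s t u : S, M.lam s (f t u) * f s (t * u) = f s t * f (s * t) u) :
    (∀ s : S, (f s s⁻¹)⁻¹ * ((f s s⁻¹)⁻¹)⁻¹ = M.α (s * s⁻¹)) ∧
    (∀ e : S, IsIdem e →
      f e e * M.lam e ((f e e⁻¹)⁻¹) * ((f (e * e) (e * e)⁻¹)⁻¹)⁻¹ * (f e e⁻¹)⁻¹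
        = M.α e) ∧
    (∀ (s e : S), IsIdem e →
      f (s * e) e * M.lam (s * e) ((f e e⁻¹)⁻¹) *
          ((f (s * e * e) (s * e * e)⁻¹)⁻¹)⁻¹ * (f (s * e) (s * e)⁻¹)⁻¹
        = M.α (s * e * s⁻¹) ∧
      f e (e * s) * M.lam e ((f (e * s) (e * s)⁻¹)⁻¹) *
          ((f (e * (e * s)) (e * (e * s))⁻¹)⁻¹)⁻¹ * (f e e⁻¹)⁻¹
        = M.α (e * s * s⁻¹)) := by
  letI : CommSemigroup A := { mul_comm := hA }
  have hxE : ∀ x : A, x * (x * x⁻¹) = x := fun x => by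
    rw [mul_comm x (x * x⁻¹)]; exact InverseSemigroup.mul_inv_mul x
  refine ⟨?_, ?_, ?_⟩
  · intro s
    rw [iinv_inv, mul_comm, hmem]
    congr 1
    rw [iinv_inv, InverseSemigroup.mul_inv_mul]
  · intro e he
    have hee : e * e = e := he
    have hei : e⁻¹ = e := iidem_inv he
    rw [hee, hei]
    have hae : f e e * (f e e)⁻¹ = M.α e := by
      have h := hmem e e
      rw [hei] at h
      simp only [hee] at h
      exact h
    rw [M.lam_idem e he, iinv_inv]
    have hEE : M.α e * M.α e = M.α e := M.α_idem e he
    calc f e e * (M.α e * (f e e)⁻¹) * f e e * (f e e)⁻¹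
        = M.α e * ((f e e * (f e e)⁻¹) * (f e e * (f e e)⁻¹)) := by ac_rfl
      _ = M.α e * (M.α e * M.α e) := by rw [hae]
      _ = M.α e := by rw [hEE, hEE]
  · intro s e he
    have hee : e * e = e := he
    have hei : e⁻¹ = e := iidem_inv he
    have hce : ∀ x : S, e * (e * x) = e * x := fun x => by rw [← mul_assoc, hee]
    have hae : f e e * (f e e)⁻¹ = M.α e := by
      have h := hmem e e
      rw [hei] at h
      simp only [hee] at h
      exact h
    have hEE : M.α e * M.α e = M.α e := M.α_idem e he
    have hss : IsIdem (s * s⁻¹) := iisIdem_mul_inv s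
    constructor
    · have hse : s * e * e = s * e := by rw [mul_assoc, hee]
      have hise : (s * e)⁻¹ = e * s⁻¹ := by rw [imul_inv_rev, hei]
      have hb : f (s*e) e * (f (s*e) e)⁻¹ = M.α (s * e * s⁻¹) := by
        have h := hmem (s*e) e
        rw [hei, hise] at h
        have harg : s*e*e*e*(e*s⁻¹) = s*e*s⁻¹ := by simp only [mul_assoc, hce]
        rw [harg] at h
        exact h
      have hcc : f (s*e) (s*e)⁻¹ * (f (s*e) (s*e)⁻¹)⁻¹ = M.α (s * e * s⁻¹) := by
        have h := hmem (s*e) (s*e)⁻¹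
        rw [iinv_inv, InverseSemigroup.mul_inv_mul] at h
        have harg : s*e*(s*e)⁻¹ = s*e*s⁻¹ := by
          rw [hise]; simp only [mul_assoc, hce]
        rw [harg] at h
        exact h
      have huv : M.lam (s*e) (f e e) * M.lam (s*e) (f e e)⁻¹ = M.α (s * e * s⁻¹) := by
        rw [← M.lam_mul, hae, M.lam_alpha _ _ he]
        congr 1
        rw [hise]
        simp only [mul_assoc, hce]
      have hc1 : M.lam (s*e) (f e e) * f (s*e) e = f (s*e) e * f (s*e) e := by
        have h := hcoc (s*e) e e
        rw [hee, hse] at h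
        exact h
      have hEb : M.α (s*e*s⁻¹) * f (s*e) e = f (s*e) e := by
        rw [← hb]; exact InverseSemigroup.mul_inv_mul _
      have hbE : f (s*e) e * M.α (s*e*s⁻¹) = f (s*e) e := by
        rw [← hb]; exact hxE _
      have h1 : f (s*e) e = M.lam (s*e) (f e e)⁻¹ * (f (s*e) e * f (s*e) e) := by
        calc f (s*e) e = M.α (s*e*s⁻¹) * f (s*e) e := hEb.symm
          _ = (M.lam (s*e) (f e e) * M.lam (s*e) (f e e)⁻¹) * f (s*e) e := by rw [huv]
          _ = M.lam (s*e) (f e e)⁻¹ * (M.lam (s*e) (f e e) * f (s*e) e) := by ac_rfl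
          _ = M.lam (s*e) (f e e)⁻¹ * (f (s*e) e * f (s*e) e) := by rw [hc1]
      have hvb : M.lam (s*e) (f e e)⁻¹ * f (s*e) e = M.α (s*e*s⁻¹) := by
        calc M.lam (s*e) (f e e)⁻¹ * f (s*e) e
            = M.lam (s*e) (f e e)⁻¹ * (f (s*e) e * M.α (s*e*s⁻¹)) := by rw [hbE]
          _ = (M.lam (s*e) (f e e)⁻¹ * (f (s*e) e * f (s*e) e)) * (f (s*e) e)⁻¹ := by
              rw [← hb]; ac_rfl
          _ = f (s*e) e * (f (s*e) e)⁻¹ := by rw [← h1]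
          _ = M.α (s*e*s⁻¹) := hb
      rw [hse, hei, iinv_inv]
      calc f (s*e) e * M.lam (s*e) (f e e)⁻¹ * f (s*e) (s*e)⁻¹ * (f (s*e) (s*e)⁻¹)⁻¹
          = (M.lam (s*e) (f e e)⁻¹ * f (s*e) e) *
              (f (s*e) (s*e)⁻¹ * (f (s*e) (s*e)⁻¹)⁻¹) := by ac_rfl
        _ = M.α (s*e*s⁻¹) * M.α (s*e*s⁻¹) := by rw [hvb, hcc]
        _ = M.α (s*e*s⁻¹) := by rw [← hcc]; exact iisIdem_mul_inv _
    · have hees : e * (e * s) = e * s := hce s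
      have hies : (e*s)⁻¹ = s⁻¹ * e := by rw [imul_inv_rev, hei]
      have hcomm : s * s⁻¹ * e = e * (s * s⁻¹) := iidem_comm hss he
      have harg : e*s*(e*s)⁻¹ = e*s*s⁻¹ := by
        calc e*s*(e*s)⁻¹ = e*s*(s⁻¹*e) := by rw [hies]
          _ = e*(s*s⁻¹*e) := by simp only [mul_assoc]
          _ = e*(e*(s*s⁻¹)) := by rw [hcomm]
          _ = e*(s*s⁻¹) := hce _
          _ = e*s*s⁻¹ := by rw [mul_assoc]
      have harg2 : e*s*s⁻¹*e = e*s*s⁻¹ := by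
        calc e*s*s⁻¹*e = e*(s*s⁻¹*e) := by simp only [mul_assoc]
          _ = e*(e*(s*s⁻¹)) := by rw [hcomm]
          _ = e*(s*s⁻¹) := hce _
          _ = e*s*s⁻¹ := by rw [mul_assoc]
      have hcc2 : f (e*s) (e*s)⁻¹ * (f (e*s) (e*s)⁻¹)⁻¹ = M.α (e*s*s⁻¹) := by
        have h := hmem (e*s) (e*s)⁻¹
        rw [iinv_inv, InverseSemigroup.mul_inv_mul, harg] at h
        exact h
      have hbb2 : f e (e*s) * (f e (e*s))⁻¹ = M.α (e*s*s⁻¹) := by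
        have h := hmem e (e*s)
        rw [hei, hees, harg, harg2] at h
        exact h
      have hFidem : M.α (e*s*s⁻¹) * M.α (e*s*s⁻¹) = M.α (e*s*s⁻¹) := by
        rw [← hcc2]; exact iisIdem_mul_inv _
      have hFb : M.α (e*s*s⁻¹) * f e (e*s) = f e (e*s) := by
        rw [← hbb2]; exact InverseSemigroup.mul_inv_mul _
      have hbF : f e (e*s) * M.α (e*s*s⁻¹) = f e (e*s) := by
        rw [← hbb2]; exact hxE _
      have hidF : IsIdem (e*s*s⁻¹) := by rw [mul_assoc]; exact iidem_mul he hss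
      have haeF : M.α e * M.α (e*s*s⁻¹) = M.α (e*s*s⁻¹) := by
        rw [← M.α_mul e _ he hidF]
        congr 1
        simp only [mul_assoc, hce]
      have haeb : M.α e * f e (e*s) = f e (e*s) := by
        calc M.α e * f e (e*s) = M.α e * (M.α (e*s*s⁻¹) * f e (e*s)) := by rw [hFb]
          _ = (M.α e * M.α (e*s*s⁻¹)) * f e (e*s) := (mul_assoc _ _ _).symm
          _ = M.α (e*s*s⁻¹) * f e (e*s) := by rw [haeF]
          _ = f e (e*s) := hFb
      have hbb : f e (e*s) * f e (e*s) = f e e * f e (e*s) := by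
        have h := hcoc e e (e*s)
        rw [hees, hee, M.lam_idem e he, haeb] at h
        exact h
      have hbaF : f e (e*s) = f e e * M.α (e*s*s⁻¹) := by
        calc f e (e*s) = f e (e*s) * (f e (e*s) * (f e (e*s))⁻¹) := (hxE _).symm
          _ = (f e (e*s) * f e (e*s)) * (f e (e*s))⁻¹ := (mul_assoc _ _ _).symm
          _ = (f e e * f e (e*s)) * (f e (e*s))⁻¹ := by rw [hbb]
          _ = f e e * (f e (e*s) * (f e (e*s))⁻¹) := mul_assoc _ _ _
          _ = f e e * M.α (e*s*s⁻¹) := by rw [hbb2]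
      rw [hees, hei, iinv_inv, M.lam_idem e he]
      calc f e (e*s) * (M.α e * (f (e*s) (e*s)⁻¹)⁻¹) * f (e*s) (e*s)⁻¹ * (f e e)⁻¹
          = (f e (e*s) * (f e e)⁻¹) *
              (M.α e * (f (e*s) (e*s)⁻¹ * (f (e*s) (e*s)⁻¹)⁻¹)) := by ac_rfl
        _ = ((f e e * M.α (e*s*s⁻¹)) * (f e e)⁻¹) * (M.α e * M.α (e*s*s⁻¹)) := by
            rw [hbaF, hcc2]
        _ = ((f e e * (f e e)⁻¹) * M.α (e*s*s⁻¹)) * (M.α e * M.α (e*s*s⁻¹)) := by ac_rfl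
        _ = (M.α e * M.α (e*s*s⁻¹)) * (M.α e * M.α (e*s*s⁻¹)) := by rw [hae]
        _ = (M.α e * M.α e) * (M.α (e*s*s⁻¹) * M.α (e*s*s⁻¹)) := by ac_rfl
        _ = M.α e * M.α (e*s*s⁻¹) := by rw [hEE, hFidem]
        _ = M.α (e*s*s⁻¹) := haeF
end

section
/- Let S be an inverse semigroup and (α, λ) an S-module structure on a semilattice of abelian groups A. For an order-preserving 0-cochain f ∈ C⁰_≤(S¹, A¹), define (δ⁰f)(s) = λ_s(f(s⁻¹ s)) f(s s⁻¹)⁻¹ and for a 1-cochain g define (δ¹g)(s,t) = λ_s(g(t)) g(st)⁻¹ g(s). Then δ¹ ∘ δ⁰ = 0, i.e., (δ¹(δ⁰f))(s,t) = α(s t t⁻¹ s⁻¹) for all s, t ∈ S. -/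
namespace ISAux
open InverseSemigroup
variable {S : Type*} [InverseSemigroup S]

lemma inv_inv' (a : S) : a⁻¹⁻¹ = a :=
  (inv_unique a⁻¹ a (inv_mul_inv a) (mul_inv_mul a)).symm

lemma idem_right (a : S) : IsIdem (a⁻¹ * a) := by
  show a⁻¹ * a * (a⁻¹ * a) = a⁻¹ * a
  rw [← mul_assoc, inv_mul_inv]

lemma idem_left (a : S) : IsIdem (a * a⁻¹) := by
  show a * a⁻¹ * (a * a⁻¹) = a * a⁻¹
  rw [← mul_assoc, mul_inv_mul]

lemma idem_inv {e : S} (he : IsIdem e) : e⁻¹ = e :=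
  (inv_unique e e (by rw [he, he]) (by rw [he, he])).symm

lemma hsq {e : S} (he : IsIdem e) (x : S) : e * (e * x) = e * x := by
  rw [← mul_assoc, he]

lemma idem_mul {e f : S} (he : IsIdem e) (hf : IsIdem f) : IsIdem (e * f) := by
  set x := (e * f)⁻¹ with hx
  have key2 : ∀ y : S, x * (e * (f * (x * y))) = x * y := by
    intro y
    have key := congrArg (· * y) (inv_mul_inv (e * f))
    simpa only [mul_assoc] using key
  have h1 : (e * f) * (f * x * e) * (e * f) = e * f := by
    have key := mul_inv_mul (e * f)
    simp only [mul_assoc] at key ⊢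
    simp only [hsq he, hsq hf]
    exact key
  have h2 : (f * x * e) * (e * f) * (f * x * e) = f * x * e := by
    simp only [mul_assoc]
    simp only [hsq he, hsq hf]
    rw [key2 e]
  have hxe : f * x * e = x := inv_unique (e * f) (f * x * e) h1 h2
  have hxidem : IsIdem x := by
    show x * x = x
    conv_lhs => rw [← hxe]
    simp only [mul_assoc]
    rw [key2 e]
    simpa only [mul_assoc] using hxe
  have hef : e * f = x := by
    calc e * f = ((e * f)⁻¹)⁻¹ := (inv_inv' _).symm
    _ = x⁻¹ := by rw [← hx]
    _ = x := idem_inv hxidem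
  rw [hef]; exact hxidem

lemma idem_comm {e f : S} (he : IsIdem e) (hf : IsIdem f) : e * f = f * e := by
  have hef : IsIdem (e * f) := idem_mul he hf
  have hfe : IsIdem (f * e) := idem_mul hf he
  have h1 : (e * f) * (f * e) * (e * f) = e * f := by
    have : (e * f) * (e * f) = e * f := hef
    simp only [mul_assoc] at this ⊢
    simp only [hsq he, hsq hf]
    exact this
  have h2 : (f * e) * (e * f) * (f * e) = f * e := by
    have : (f * e) * (f * e) = f * e := hfe
    simp only [mul_assoc] at this ⊢
    simp only [hsq he, hsq hf]
    exact this
  have := inv_unique (e * f) (f * e) h1 h2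
  rw [this, idem_inv hef]

lemma mul_inv_rev' (a b : S) : (a * b)⁻¹ = b⁻¹ * a⁻¹ := by
  refine (inv_unique (a * b) (b⁻¹ * a⁻¹) ?_ ?_).symm
  · calc (a * b) * (b⁻¹ * a⁻¹) * (a * b)
        = a * ((b * b⁻¹) * (a⁻¹ * a)) * b := by simp only [mul_assoc]
      _ = a * ((a⁻¹ * a) * (b * b⁻¹)) * b := by
          rw [idem_comm (idem_left b) (idem_right a)]
      _ = (a * a⁻¹ * a) * (b * b⁻¹ * b) := by simp only [mul_assoc]
      _ = a * b := by rw [mul_inv_mul, mul_inv_mul]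
  · calc (b⁻¹ * a⁻¹) * (a * b) * (b⁻¹ * a⁻¹)
        = b⁻¹ * ((a⁻¹ * a) * (b * b⁻¹)) * a⁻¹ := by simp only [mul_assoc]
      _ = b⁻¹ * ((b * b⁻¹) * (a⁻¹ * a)) * a⁻¹ := by
          rw [idem_comm (idem_right a) (idem_left b)]
      _ = (b⁻¹ * b * b⁻¹) * (a⁻¹ * a * a⁻¹) := by simp only [mul_assoc]
      _ = b⁻¹ * a⁻¹ := by rw [inv_mul_inv, inv_mul_inv]

end ISAux

namespace ISAux
open InverseSemigroup
variable {S A : Type*} [InverseSemigroup S] [InverseSemigroup A]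

lemma lam_inv (M : SMod S A) (s : S) (a : A) :
    M.lam s a⁻¹ = (M.lam s a)⁻¹ := by
  refine inv_unique (M.lam s a) (M.lam s a⁻¹) ?_ ?_
  · rw [← M.lam_mul, ← M.lam_mul, mul_inv_mul]
  · rw [← M.lam_mul, ← M.lam_mul, inv_mul_inv]

lemma ord_key (hA : ∀ a b : A, a * b = b * a) (M : SMod S A) (f : S → A)
    (hmem : ∀ e : S, IsIdem e → f e * (f e)⁻¹ = M.α e)
    (hord : ∀ e e' : S, IsIdem e → IsIdem e' → NatLe e e' → NatLe (f e) (f e'))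
    {e e' : S} (he : IsIdem e) (he' : IsIdem e') (hle : NatLe e e') :
    f e = M.α e * f e' := by
  letI : CommSemigroup A := { mul_comm := hA }
  obtain ⟨g, hg, hfe⟩ := hord e e' he he' hle
  have hginv : g⁻¹ = g := idem_inv hg
  have hαe : M.α e = g * (f e' * (f e')⁻¹) := by
    rw [← hmem e he, hfe, mul_inv_rev', hginv]
    calc g * f e' * ((f e')⁻¹ * g) = (g * g) * (f e' * (f e')⁻¹) := by ac_rfl
      _ = g * (f e' * (f e')⁻¹) := by rw [hg]
  have hred : f e' * (f e')⁻¹ * f e' = f e' := mul_inv_mul (f e')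
  calc f e = g * f e' := hfe
    _ = g * (f e' * (f e')⁻¹ * f e') := by rw [hred]
    _ = g * (f e' * (f e')⁻¹) * f e' := by rw [← mul_assoc]
    _ = M.α e * f e' := by rw [← hαe]

lemma pair_key (hA : ∀ a b : A, a * b = b * a) (M : SMod S A) (f : S → A)
    (hmem : ∀ e : S, IsIdem e → f e * (f e)⁻¹ = M.α e)
    (hord : ∀ e e' : S, IsIdem e → IsIdem e' → NatLe e e' → NatLe (f e) (f e'))
    {e1 e2 : S} (he1 : IsIdem e1) (he2 : IsIdem e2) :
    (f e1)⁻¹ * f e2 = M.α (e1 * e2) := by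
  letI : CommSemigroup A := { mul_comm := hA }
  have he : IsIdem (e1 * e2) := idem_mul he1 he2
  have hee1 : (e1 * e2) * e1 = e1 * e2 := by
    rw [mul_assoc, idem_comm he2 he1, ← mul_assoc, he1]
  have h1 : f (e1 * e2) = M.α (e1 * e2) * f e1 :=
    ord_key hA M f hmem hord he he1 ⟨e1 * e2, he, hee1.symm⟩
  have h2 : f (e1 * e2) = M.α (e1 * e2) * f e2 :=
    ord_key hA M f hmem hord he he2 ⟨e1, he1, rfl⟩
  have step : (f e1)⁻¹ * f e2 = M.α (e1 * e2) * ((f e1)⁻¹ * f e1) := by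
    calc (f e1)⁻¹ * f e2
        = ((f e1)⁻¹ * f e1 * (f e1)⁻¹) * (f e2 * (f e2)⁻¹ * f e2) := by
          rw [inv_mul_inv, mul_inv_mul]
      _ = ((f e1 * (f e1)⁻¹) * (f e2 * (f e2)⁻¹)) * ((f e1)⁻¹ * f e2) := by ac_rfl
      _ = (M.α e1 * M.α e2) * ((f e1)⁻¹ * f e2) := by rw [hmem e1 he1, hmem e2 he2]
      _ = M.α (e1 * e2) * ((f e1)⁻¹ * f e2) := by rw [M.α_mul e1 e2 he1 he2]
      _ = (f e1)⁻¹ * (M.α (e1 * e2) * f e2) := by ac_rfl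
      _ = (f e1)⁻¹ * f (e1 * e2) := by rw [← h2]
      _ = (f e1)⁻¹ * (M.α (e1 * e2) * f e1) := by rw [h1]
      _ = M.α (e1 * e2) * ((f e1)⁻¹ * f e1) := by ac_rfl
  rw [step, hA ((f e1)⁻¹) (f e1), hmem e1 he1, ← M.α_mul _ _ he he1, hee1]

lemma final_calc (hA : ∀ a b : A, a * b = b * a) (u v w z E Es : A)
    (hE : IsIdem E) (hEs : IsIdem Es)
    (hu : u * u⁻¹ = E) (hw : w * w⁻¹ = Es) (hvz : v⁻¹ * z = E * Es)
    (hEEs : E * Es = E) :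
    u * v⁻¹ * (E * u * (E * w)⁻¹)⁻¹ * (z * w⁻¹) = E := by
  letI : CommSemigroup A := { mul_comm := hA }
  have hEinv : E⁻¹ = E := idem_inv hE
  calc u * v⁻¹ * (E * u * (E * w)⁻¹)⁻¹ * (z * w⁻¹)
      = u * v⁻¹ * ((E * w) * (u⁻¹ * E⁻¹)) * (z * w⁻¹) := by
        rw [mul_inv_rev' (E * u) ((E * w)⁻¹), inv_inv' (E * w), mul_inv_rev' E u]
    _ = (u * u⁻¹) * (E⁻¹ * E) * (v⁻¹ * z) * (w * w⁻¹) := by ac_rfl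
    _ = E * (E * E) * (E * Es) * Es := by rw [hEinv, hu, hw, hvz]
    _ = E := by
        have hEs' : Es * Es = Es := hEs
        simp only [mul_assoc, hsq hE]
        rw [hEs', hEEs]

end ISAux

open ISAux InverseSemigroup

/-- For an order-preserving 0-cochain `f ∈ C⁰_≤(S¹,A¹)`, with
`(δ⁰f)(s) = λ_s(f(s⁻¹s)) f(ss⁻¹)⁻¹` and
`(δ¹g)(s,t) = λ_s(g(t)) g(st)⁻¹ g(s)`, one has `δ¹(δ⁰f) = 0`, i.e.
`(δ¹(δ⁰f))(s,t) = α(s t t⁻¹ s⁻¹)`. -/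
theorem stmt10 {S A : Type*} [InverseSemigroup S] [InverseSemigroup A]
    (hA : ∀ a b : A, a * b = b * a) (M : SMod S A) (f : S → A)
    (hmem : ∀ e : S, IsIdem e → f e * (f e)⁻¹ = M.α e)
    (hord : ∀ e e' : S, IsIdem e → IsIdem e' → NatLe e e' → NatLe (f e) (f e')) :
    ∀ s t : S,
      M.lam s (M.lam t (f (t⁻¹ * t)) * (f (t * t⁻¹))⁻¹) *
        (M.lam (s * t) (f ((s * t)⁻¹ * (s * t))) * (f ((s * t) * (s * t)⁻¹))⁻¹)⁻¹ *
        (M.lam s (f (s⁻¹ * s)) * (f (s * s⁻¹))⁻¹)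
      = M.α (s * t * t⁻¹ * s⁻¹) := by
  intro s t
  have hstinv : (s * t)⁻¹ = t⁻¹ * s⁻¹ := mul_inv_rev' s t
  have hSE : (s * t) * (s * t)⁻¹ = s * t * t⁻¹ * s⁻¹ := by rw [hstinv, ← mul_assoc]
  have hidemE : IsIdem (s * t * t⁻¹ * s⁻¹) := hSE ▸ idem_left (s * t)
  have hidemEs : IsIdem (s * s⁻¹) := idem_left s
  -- natural order facts in S
  have h_le1 : NatLe ((s * t)⁻¹ * (s * t)) (t⁻¹ * t) := by
    refine ⟨(s * t)⁻¹ * (s * t), idem_right (s * t), ?_⟩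
    rw [hstinv]
    calc t⁻¹ * s⁻¹ * (s * t)
        = t⁻¹ * (s⁻¹ * s) * t := by simp only [mul_assoc]
      _ = t⁻¹ * (s⁻¹ * s) * (t * t⁻¹ * t) := by rw [mul_inv_mul]
      _ = t⁻¹ * s⁻¹ * (s * t) * (t⁻¹ * t) := by simp only [mul_assoc]
  have h_le2 : NatLe ((s * t) * (s * t)⁻¹) (s * s⁻¹) := by
    refine ⟨(s * t) * (s * t)⁻¹, idem_left (s * t), ?_⟩
    rw [hstinv]
    calc s * t * (t⁻¹ * s⁻¹)
        = s * (t * t⁻¹) * s⁻¹ := by simp only [mul_assoc]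
      _ = s * (t * t⁻¹) * (s⁻¹ * s * s⁻¹) := by rw [inv_mul_inv]
      _ = s * t * (t⁻¹ * s⁻¹) * (s * s⁻¹) := by simp only [mul_assoc]
  -- S-element computations
  have hS2 : (s * t) * ((s * t)⁻¹ * (s * t)) * (s * t)⁻¹ = s * t * t⁻¹ * s⁻¹ := by
    rw [← mul_assoc (s * t) ((s * t)⁻¹) (s * t), mul_inv_mul, hSE]
  have hS3 : (s * t) * (t⁻¹ * t) * (s * t)⁻¹ = s * t * t⁻¹ * s⁻¹ := by
    rw [hstinv]
    calc (s * t) * (t⁻¹ * t) * (t⁻¹ * s⁻¹)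
        = s * (t * t⁻¹ * t) * (t⁻¹ * s⁻¹) := by simp only [mul_assoc]
      _ = s * t * (t⁻¹ * s⁻¹) := by rw [mul_inv_mul]
      _ = s * t * t⁻¹ * s⁻¹ := by rw [mul_assoc (s * t)]
  have hS4 : s * (t * t⁻¹) * s⁻¹ = s * t * t⁻¹ * s⁻¹ := by simp only [mul_assoc]
  have hS5 : s * (s⁻¹ * s) * s⁻¹ = s * s⁻¹ := by
    rw [← mul_assoc s s⁻¹ s, mul_inv_mul]
  have hS6 : (s * t * t⁻¹ * s⁻¹) * (s * s⁻¹) = s * t * t⁻¹ * s⁻¹ := by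
    calc (s * t * t⁻¹ * s⁻¹) * (s * s⁻¹)
        = s * (t * t⁻¹) * (s⁻¹ * s * s⁻¹) := by simp only [mul_assoc]
      _ = s * (t * t⁻¹) * s⁻¹ := by rw [inv_mul_inv]
      _ = s * t * t⁻¹ * s⁻¹ := by rw [← hS4]
  -- order-preservation facts
  have hf1 : f ((s * t)⁻¹ * (s * t)) = M.α ((s * t)⁻¹ * (s * t)) * f (t⁻¹ * t) :=
    ord_key hA M f hmem hord (idem_right (s * t)) (idem_right t) h_le1
  have hf2 : f ((s * t) * (s * t)⁻¹) = M.α (s * t * t⁻¹ * s⁻¹) * f (s * s⁻¹) := by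
    have h := ord_key hA M f hmem hord (idem_left (s * t)) (idem_left s) h_le2
    rw [h, hSE]
  -- the three factors
  have F1 : M.lam s (M.lam t (f (t⁻¹ * t)) * (f (t * t⁻¹))⁻¹)
      = M.lam (s * t) (f (t⁻¹ * t)) * (M.lam s (f (t * t⁻¹)))⁻¹ := by
    rw [M.lam_mul, M.lam_comp, lam_inv]
  have F2 : M.lam (s * t) (f ((s * t)⁻¹ * (s * t))) * (f ((s * t) * (s * t)⁻¹))⁻¹
      = M.α (s * t * t⁻¹ * s⁻¹) * M.lam (s * t) (f (t⁻¹ * t)) *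
        (M.α (s * t * t⁻¹ * s⁻¹) * f (s * s⁻¹))⁻¹ := by
    rw [hf1, hf2, M.lam_mul, M.lam_alpha _ _ (idem_right (s * t)), hS2]
  -- atoms' facts
  have hu : M.lam (s * t) (f (t⁻¹ * t)) * (M.lam (s * t) (f (t⁻¹ * t)))⁻¹
      = M.α (s * t * t⁻¹ * s⁻¹) := by
    rw [← lam_inv, ← M.lam_mul, hmem _ (idem_right t),
      M.lam_alpha _ _ (idem_right t), hS3]
  have hw : f (s * s⁻¹) * (f (s * s⁻¹))⁻¹ = M.α (s * s⁻¹) := hmem _ hidemEs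
  have hvz : (M.lam s (f (t * t⁻¹)))⁻¹ * M.lam s (f (s⁻¹ * s))
      = M.α (s * t * t⁻¹ * s⁻¹) * M.α (s * s⁻¹) := by
    rw [← lam_inv, ← M.lam_mul,
      pair_key hA M f hmem hord (idem_left t) (idem_right s),
      M.α_mul _ _ (idem_left t) (idem_right s), M.lam_mul,
      M.lam_alpha _ _ (idem_left t), M.lam_alpha _ _ (idem_right s), hS4, hS5]
  have hEEs : M.α (s * t * t⁻¹ * s⁻¹) * M.α (s * s⁻¹) = M.α (s * t * t⁻¹ * s⁻¹) := by
    rw [← M.α_mul _ _ hidemE hidemEs, hS6]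
  rw [F1, F2]
  exact final_calc hA _ _ _ _ _ _ (M.α_idem _ hidemE) (M.α_idem _ hidemEs)
    hu hw hvz hEEs
end

section
/- Let U be a split extension of an S-module A by an inverse semigroup S (with maps i : A → U, j : U → S). Then the splittings of U (transversals of j that are homomorphisms) are in one-to-one correspondence with the elements of Z¹(S¹, A¹) = {g : S → A : g(s) ∈ A_{α(s s⁻¹)} and g(st) = g(s) λ_s(g(t))}. -/
/-- Multiplication of the crossed product `A ∗_{(α,λ)} S` (trivial twisting):
`aδ_s · bδ_t = a λ_s(b) δ_{st}`. -/
def cp0mul {S A : Type*} [InverseSemigroup S] [InverseSemigroup A]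
    (M : SMod S A) (p q : A × S) : A × S :=
  (p.1 * M.lam p.2 q.1, p.2 * q.2)

/-- A splitting of the extension `A → A ∗_{(α,λ)} S → S`: a transversal of `j`
(mapping idempotents to idempotents) which is a homomorphism. -/
def IsSplitting {S A : Type*} [InverseSemigroup S] [InverseSemigroup A]
    (M : SMod S A) (K : S → A × S) : Prop :=
  (∀ s : S, (K s).2 = s) ∧
  (∀ s : S, (K s).1 * (K s).1⁻¹ = M.α (s * s⁻¹)) ∧
  (∀ s t : S, K (s * t) = cp0mul M (K s) (K t)) ∧
  (∀ e : S, IsIdem e → cp0mul M (K e) (K e) = K e)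

/-- The splittings of the split extension `A ∗_{(α,λ)} S` of the `S`-module `A`
are in one-to-one correspondence with the elements of
`Z¹(S¹,A¹) = {g : g(s) ∈ A_{α(ss⁻¹)}, g(st) = g(s) λ_s(g(t))}`,
via `g ↦ (s ↦ g(s)δ_s)`. -/
theorem stmt15 {S A : Type*} [InverseSemigroup S] [InverseSemigroup A]
    (hA : ∀ a b : A, a * b = b * a) (M : SMod S A) :
    (∀ g : S → A,
      ((∀ s : S, g s * (g s)⁻¹ = M.α (s * s⁻¹)) ∧
       (∀ s t : S, g (s * t) = g s * M.lam s (g t))) →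
      IsSplitting M (fun s => (g s, s))) ∧
    (∀ K : S → A × S, IsSplitting M K →
      ∃! g : S → A,
        ((∀ s : S, g s * (g s)⁻¹ = M.α (s * s⁻¹)) ∧
         (∀ s t : S, g (s * t) = g s * M.lam s (g t))) ∧
        K = fun s => (g s, s)) := by
  constructor
  · rintro g ⟨h1, h2⟩
    refine ⟨fun s => rfl, h1, fun s t => ?_, fun e he => ?_⟩
    · simp only [cp0mul]
      exact Prod.ext (h2 s t) rfl
    · simp only [cp0mul]
      refine Prod.ext ?_ he
      have := (h2 e e).symm
      rw [he] at this
      exact this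
  · rintro K ⟨h1, h2, h3, _⟩
    refine ⟨fun s => (K s).1, ⟨⟨h2, fun s t => ?_⟩, ?_⟩, ?_⟩
    · show (K (s*t)).1 = _
      rw [h3 s t]; simp [cp0mul, h1]
    · funext s; exact Prod.ext rfl (h1 s)
    · rintro g ⟨_, hg⟩
      funext s
      exact (congrArg Prod.fst (congrFun hg s)).symm
end

section
/- Let G be a group, (A,θ) a partial G-module (a partial action θ of G on a semilattice of abelian groups A), and w ∈ C²(G,A) a partial 2-cochain. Then w satisfies w(1,x) = w(x,1) = id_{D_x} for all x ∈ G if and only if the corresponding order-preserving 2-cochain f ∈ C²_≤(S¹,A¹) (on S = E(A) ∗_θ G) defined by f(s,t) = α(s t t⁻¹ s⁻¹) w(κ(s), κ(t)) satisfies Sieben's condition: f(s,e) = α(s e s⁻¹) and f(e,s) = α(e s s⁻¹) for all s ∈ S, e ∈ E(S). -/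
/-- A partial action `θ` of a group `G` on an inverse semigroup `A`:
isomorphisms `θ_x : D_{x⁻¹} → D_x` between nonempty ideals with `D₁ = A`,
`θ₁ = id`, `θ_x(D_{x⁻¹} ∩ D_y) = D_x ∩ D_{xy}` and `θ_x ∘ θ_y ⊆ θ_{xy}`. -/
structure PAct (G A : Type*) [Group G] [InverseSemigroup A] where
  D : G → Set A
  θ : G → A → A
  D_nonempty : ∀ x : G, (D x).Nonempty
  D_ideal : ∀ x : G, ∀ s : A, ∀ a ∈ D x, s * a ∈ D x ∧ a * s ∈ D x
  D_one : D 1 = Set.univ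
  θ_one : ∀ a : A, θ 1 a = a
  θ_bij : ∀ x : G, Set.BijOn (θ x) (D x⁻¹) (D x)
  θ_mul : ∀ x : G, ∀ a ∈ D x⁻¹, ∀ b ∈ D x⁻¹, θ x (a * b) = θ x a * θ x b
  θ_range : ∀ x y : G, θ x '' (D x⁻¹ ∩ D y) = D x ∩ D (x * y)
  θ_comp : ∀ x y : G, ∀ a ∈ D y⁻¹ ∩ D (y⁻¹ * x⁻¹), θ x (θ y a) = θ (x * y) a

/-- Multiplication of the crossed product `E(A) ∗_θ G` (and of `A ∗_θ G`):
`aδ_x · bδ_y = θ_x(θ_{x⁻¹}(a) b) δ_{xy}`. -/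
def smul {G A : Type*} [Group G] [InverseSemigroup A] (P : PAct G A)
    (p q : A × G) : A × G :=
  (P.θ p.2 (P.θ p.2⁻¹ p.1 * q.1), p.2 * q.2)

/-- Inversion in the crossed product: `(aδ_x)⁻¹ = θ_{x⁻¹}(a⁻¹) δ_{x⁻¹}`
(for `a` idempotent, `a⁻¹ = a`). -/
def sinv {G A : Type*} [Group G] [InverseSemigroup A] (P : PAct G A)
    (p : A × G) : A × G :=
  (P.θ p.2⁻¹ p.1⁻¹, p.2⁻¹)

/-- Membership in `S = E(A) ∗_θ G`: pairs `eδ_x` with `e` an idempotent of `D_x`. -/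
def SC {G A : Type*} [Group G] [InverseSemigroup A] (P : PAct G A)
    (p : A × G) : Prop :=
  p.1 ∈ P.D p.2 ∧ IsIdem p.1

open Pointwise

section Helpers
variable {G A : Type*} [Group G] [InverseSemigroup A]

lemma my_idem_inv {e : A} (he : IsIdem e) : e⁻¹ = e :=
  (InverseSemigroup.inv_unique e e (by rw [he, he]) (by rw [he, he])).symm

lemma my_mul_inv_mul (a : A) : a * a⁻¹ * a = a := InverseSemigroup.mul_inv_mul a

lemma my_idem_sq (hA : ∀ a b : A, a * b = b * a) (a : A) : IsIdem (a * a⁻¹) := by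
  unfold IsIdem
  rw [← mul_assoc, my_mul_inv_mul]

lemma my_mul_sq (hA : ∀ a b : A, a * b = b * a) (a : A) : a * (a * a⁻¹) = a := by
  rw [hA a a⁻¹, ← mul_assoc, my_mul_inv_mul]

variable (P : PAct G A)

lemma my_theta_mem {x : G} {a : A} (ha : a ∈ P.D x⁻¹) : P.θ x a ∈ P.D x :=
  (P.θ_bij x).mapsTo ha

lemma my_theta_inv_mem {x : G} {a : A} (ha : a ∈ P.D x) : P.θ x⁻¹ a ∈ P.D x⁻¹ := by
  have h := (P.θ_bij x⁻¹).mapsTo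
  rw [inv_inv] at h
  exact h ha

lemma my_theta_theta_inv {x : G} {a : A} (ha : a ∈ P.D x) :
    P.θ x (P.θ x⁻¹ a) = a := by
  have h := P.θ_comp x x⁻¹ a ⟨by rwa [inv_inv], by simp [P.D_one]⟩
  rwa [mul_inv_cancel, P.θ_one] at h

lemma my_theta_inv_theta {x : G} {a : A} (ha : a ∈ P.D x⁻¹) :
    P.θ x⁻¹ (P.θ x a) = a := by
  have h := P.θ_comp x⁻¹ x a ⟨ha, by simp [P.D_one]⟩
  rwa [inv_mul_cancel, P.θ_one] at h

lemma my_theta_inv_mul {x : G} {a b : A} (ha : a ∈ P.D x) (hb : b ∈ P.D x) :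
    P.θ x⁻¹ (a * b) = P.θ x⁻¹ a * P.θ x⁻¹ b := by
  have h := P.θ_mul x⁻¹
  rw [inv_inv] at h
  exact h a ha b hb

lemma my_theta_idem {x : G} {a : A} (ha : a ∈ P.D x⁻¹) (h : IsIdem a) :
    IsIdem (P.θ x a) := by
  unfold IsIdem
  rw [← P.θ_mul x a ha a ha, h]

lemma my_theta_inv_idem {x : G} {a : A} (ha : a ∈ P.D x) (h : IsIdem a) :
    IsIdem (P.θ x⁻¹ a) := by
  unfold IsIdem
  rw [← my_theta_inv_mul P ha ha, h]

open Pointwise in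
lemma my_mem_prod (hA : ∀ a b : A, a * b = b * a) {x : G} {y z : G} {a : A}
    (ha : a ∈ P.D x) (hy : a * a⁻¹ ∈ P.D y) (hz : P.D z = P.D x) :
    a ∈ P.D y * P.D z := by
  have : (a * a⁻¹) * a ∈ P.D y * P.D z := Set.mul_mem_mul hy (hz ▸ ha)
  rwa [my_mul_inv_mul] at this

end Helpers

section Comp
variable {G A : Type*} [Group G] [InverseSemigroup A] (P : PAct G A)
  (hA : ∀ a b : A, a * b = b * a)

lemma comp_sinv_s {x : G} {a : A} (hia : IsIdem a) :
    sinv P (a, x) = (P.θ x⁻¹ a, x⁻¹) := by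
  simp [sinv, my_idem_inv hia]

lemma comp_sinv_e {f : A} (hf : IsIdem f) :
    sinv P (f, (1:G)) = (f, 1) := by
  simp [sinv, my_idem_inv hf, P.θ_one]

lemma comp_se {x : G} {a f : A} :
    smul P (a, x) (f, 1) = (P.θ x (P.θ x⁻¹ a * f), x) := by
  simp [smul]

lemma comp_es {x : G} {a f : A} :
    smul P (f, 1) (a, x) = (f * a, x) := by
  simp [smul, P.θ_one]

lemma comp_see {x : G} {a f : A} (ha : a ∈ P.D x) (hia : IsIdem a) (hf : IsIdem f) :
    smul P (P.θ x (P.θ x⁻¹ a * f), x) (f, 1)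
      = (P.θ x (P.θ x⁻¹ a * f), x) := by
  have ha' := my_theta_inv_mem P ha
  have haf : P.θ x⁻¹ a * f ∈ P.D x⁻¹ := (P.D_ideal x⁻¹ f _ ha').2
  simp only [smul, my_theta_inv_theta P haf, mul_one]
  congr 2
  rw [mul_assoc, hf]

lemma comp_ses (hA : ∀ a b : A, a * b = b * a)
    {x : G} {a f : A} (ha : a ∈ P.D x) (hia : IsIdem a) :
    smul P (P.θ x (P.θ x⁻¹ a * f), x) (P.θ x⁻¹ a, x⁻¹)
      = (P.θ x (P.θ x⁻¹ a * f), 1) := by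
  have ha' := my_theta_inv_mem P ha
  have haf : P.θ x⁻¹ a * f ∈ P.D x⁻¹ := (P.D_ideal x⁻¹ f _ ha').2
  have hidem : IsIdem (P.θ x⁻¹ a) := my_theta_inv_idem P ha hia
  simp only [smul, my_theta_inv_theta P haf, mul_inv_cancel, Prod.mk.injEq]
  refine ⟨?_, trivial⟩
  congr 1
  rw [mul_assoc, hA f, ← mul_assoc, hidem]

lemma comp_ess {x : G} {a f : A} (ha : a ∈ P.D x) (hia : IsIdem a) :
    smul P (f * a, x) (P.θ x⁻¹ a, x⁻¹) = (f * a, 1) := by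
  have hfa : f * a ∈ P.D x := (P.D_ideal x f a ha).1
  simp only [smul, mul_inv_cancel]
  congr 2
  rw [← my_theta_inv_mul P hfa ha, mul_assoc, hia, my_theta_theta_inv P hfa]

lemma comp_esse (hA : ∀ a b : A, a * b = b * a) {a f : A} (hf : IsIdem f) :
    smul P (f * a, (1:G)) (f, 1) = (f * a, 1) := by
  simp only [smul, inv_one, P.θ_one, mul_one, Prod.mk.injEq]
  refine ⟨?_, trivial⟩
  rw [mul_assoc, hA a f, ← mul_assoc, hf]

end Comp

/-- A partial 2-cochain `w ∈ C²(G,A)` (given by its left/right actions `wl, wr`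
with inverse multiplier `(wil, wir)` on the ideals `D_x D_{xy}`) satisfies
`w(1,x) = w(x,1) = id_{D_x}` iff the corresponding order-preserving 2-cochain
`f(s,t) = α(s t t⁻¹ s⁻¹) w(κ(s),κ(t))` on `S = E(A) ∗_θ G` satisfies Sieben's
condition `f(s,e) = α(s e s⁻¹)` and `f(e,s) = α(e s s⁻¹)`. -/
theorem stmt18 {G A : Type*} [Group G] [InverseSemigroup A]
    (hA : ∀ a b : A, a * b = b * a) (P : PAct G A)
    (wl wr wil wir : G → G → A → A)
    (hw_mem : ∀ x y : G, ∀ a ∈ P.D x * P.D (x * y),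
      wl x y a ∈ P.D x * P.D (x * y) ∧ wr x y a ∈ P.D x * P.D (x * y) ∧
      wil x y a ∈ P.D x * P.D (x * y) ∧ wir x y a ∈ P.D x * P.D (x * y))
    (hw_mult : ∀ x y : G, ∀ a ∈ P.D x * P.D (x * y), ∀ b ∈ P.D x * P.D (x * y),
      wl x y (a * b) = wl x y a * b ∧ wr x y (a * b) = a * wr x y b ∧
      a * wl x y b = wr x y a * b ∧
      wil x y (a * b) = wil x y a * b ∧ wir x y (a * b) = a * wir x y b ∧
      a * wil x y b = wir x y a * b)
    (hw_inv : ∀ x y : G, ∀ a ∈ P.D x * P.D (x * y),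
      wl x y (wil x y a) = a ∧ wil x y (wl x y a) = a ∧
      wr x y (wir x y a) = a ∧ wir x y (wr x y a) = a) :
    (∀ x : G, ∀ a ∈ P.D x,
      wl 1 x a = a ∧ wr 1 x a = a ∧ wl x 1 a = a ∧ wr x 1 a = a) ↔
    (∀ s : A × G, SC P s → ∀ e : A × G, SC P e → e.2 = 1 →
      wr s.2 e.2 ((smul P (smul P (smul P s e) (sinv P e)) (sinv P s)).1)
          = (smul P (smul P s e) (sinv P s)).1 ∧
      wr e.2 s.2 ((smul P (smul P (smul P e s) (sinv P s)) (sinv P e)).1)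
          = (smul P (smul P e s) (sinv P s)).1) := by
  constructor
  · intro H s hs e he he2
    obtain ⟨a, x⟩ := s
    obtain ⟨f, g⟩ := e
    simp only at he2
    subst he2
    obtain ⟨ha, hia⟩ := hs
    obtain ⟨-, hf⟩ := he
    have ha' := my_theta_inv_mem P ha
    have haf : P.θ x⁻¹ a * f ∈ P.D x⁻¹ := (P.D_ideal x⁻¹ f _ ha').2
    have hb : P.θ x (P.θ x⁻¹ a * f) ∈ P.D x := my_theta_mem P haf
    have hfa : f * a ∈ P.D x := (P.D_ideal x f a ha).1
    rw [comp_se, comp_sinv_e P hf, comp_see P ha hia hf, comp_sinv_s P hia,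
        comp_ses P hA ha hia, comp_es, comp_ess P ha hia, comp_esse P hA hf]
    exact ⟨(H x _ hb).2.2.2, (H x _ hfa).2.1⟩
  · intro H x a ha
    have hiu : IsIdem (a * a⁻¹) := my_idem_sq hA a
    set u := a * a⁻¹ with hu
    have hiu' : u * u = u := hiu
    have hu_mem : u ∈ P.D x := (P.D_ideal x a⁻¹ a ha).2
    have hu1 : u ∈ P.D 1 := by rw [P.D_one]; trivial
    -- wr 1 x u = u
    have h2 := (H (u, x) ⟨hu_mem, hiu⟩ (u, 1) ⟨hu1, hiu⟩ rfl).2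
    rw [comp_es, comp_sinv_s P hiu, comp_ess P hu_mem hiu, comp_sinv_e P hiu,
        comp_esse P hA hiu] at h2
    simp only [hiu'] at h2
    have h2' : wr 1 x u = u := h2
    -- wr x 1 u = u
    have hut : P.θ x⁻¹ u ∈ P.D 1 := by rw [P.D_one]; trivial
    have hitu : IsIdem (P.θ x⁻¹ u) := my_theta_inv_idem P hu_mem hiu
    have hitu' : P.θ x⁻¹ u * P.θ x⁻¹ u = P.θ x⁻¹ u := hitu
    have h1 := (H (u, x) ⟨hu_mem, hiu⟩ (P.θ x⁻¹ u, 1) ⟨hut, hitu⟩ rfl).1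
    rw [comp_se, comp_sinv_e P hitu, comp_see P hu_mem hiu hitu, comp_sinv_s P hiu,
        comp_ses P hA hu_mem hiu] at h1
    simp only [hitu', my_theta_theta_inv P hu_mem] at h1
    have h1' : wr x 1 u = u := h1
    -- memberships
    have hau : a * u = a := my_mul_sq hA a
    have hua : u * a = a := by rw [hA]; exact hau
    have mem1a : a ∈ P.D 1 * P.D (1 * x) :=
      my_mem_prod P hA ha hu1 (by rw [one_mul])
    have mem1u : u ∈ P.D 1 * P.D (1 * x) :=
      my_mem_prod P hA hu_mem (by rw [P.D_one]; trivial) (by rw [one_mul])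
    have memxa : a ∈ P.D x * P.D (x * 1) :=
      my_mem_prod P hA ha hu_mem (by rw [mul_one])
    have memxu : u ∈ P.D x * P.D (x * 1) := by
      refine my_mem_prod P hA hu_mem ?_ (by rw [mul_one])
      rw [my_idem_inv hiu, hiu']; exact hu_mem
    refine ⟨?_, ?_, ?_, ?_⟩
    · -- wl 1 x a = a
      have t1 := (hw_mult 1 x a mem1a u mem1u).1
      rw [hau] at t1
      have t3 := (hw_mult 1 x u mem1u a mem1a).2.2.1
      rw [h2', hua] at t3
      calc wl 1 x a = wl 1 x a * u := t1
        _ = u * wl 1 x a := hA _ _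
        _ = a := t3
    · -- wr 1 x a = a
      have t2 := (hw_mult 1 x a mem1a u mem1u).2.1
      rw [hau, h2', hau] at t2
      exact t2
    · -- wl x 1 a = a
      have t1 := (hw_mult x 1 a memxa u memxu).1
      rw [hau] at t1
      have t3 := (hw_mult x 1 u memxu a memxa).2.2.1
      rw [h1', hua] at t3
      calc wl x 1 a = wl x 1 a * u := t1
        _ = u * wl x 1 a := hA _ _
        _ = a := t3
    · -- wr x 1 a = a
      have t2 := (hw_mult x 1 a memxa u memxu).2.1
      rw [hau, h1', hau] at t2
      exact t2
end
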